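/- For n ≥ 3, a permutation σ ∈ S_n satisfies pmp_{\underline{1}23}(σ) = n-2 if and only if σ_{n-1} = n-1 and σ_n = n. -/

import Mathlib

/-!
If position `i` starts a 123, then `i < j < k ≤ n - 1` and `σ i < σ j < σ k ≤ n - 1`, so both
`i` and `σ i` lie below `n - 2`. Hence `pmp₁₂₃(σ) = n - 2` says exactly that every `i < n - 2`
starts a 123. Then `σ` maps `{0, …, n - 3}` into itself, hence the last two positions onto the
last two values, and the 123 starting at `n - 3` forces `σ (n - 2) < σ (n - 1)`. Conversely, if
`σ` fixes `n - 2` and `n - 1`, then every `i < n - 2` has `σ i < n - 2` and starts the 123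
`(i, n - 2, n - 1)`.
-/

/-- Number of positions `i` that start an occurrence of the pattern 123 in `σ`,
i.e. `pmp` of the positional marked pattern `\underline{1}23`. -/
noncomputable def pmpS123 {n : ℕ} (σ : Equiv.Perm (Fin n)) : ℕ :=
  Nat.card {i : Fin n // ∃ j k : Fin n, i < j ∧ j < k ∧ σ i < σ j ∧ σ j < σ k}

open Finset Set

theorem Equiv.Perm.mapsTo_compl_of_mapsTo {α : Type*} [Finite α] (σ : Equiv.Perm α)
    {s : Set α} (h : MapsTo σ s s) : MapsTo σ sᶜ sᶜ :=
  ((s.toFinite.injOn_iff_bijOn_of_mapsTo h).mp σ.injective.injOn).surjOn.mapsTo_compl σ.injective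

theorem Fin.val_lt_sub_two_of_lt_of_lt {n : ℕ} {a b c : Fin n} (hab : a < b) (hbc : b < c) :
    (a : ℕ) < n - 2 := by
  rw [Fin.lt_def] at hab hbc
  omega

section

variable {n : ℕ} {σ : Equiv.Perm (Fin n)}

/-- `σ` has a `\underline{1}23`-match at position `i`. -/
def Starts123 (σ : Equiv.Perm (Fin n)) (i : Fin n) : Prop :=
  ∃ j k : Fin n, i < j ∧ j < k ∧ σ i < σ j ∧ σ j < σ k

theorem Starts123.val_lt {i : Fin n} (h : Starts123 σ i) : (i : ℕ) < n - 2 := by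
  obtain ⟨j, k, hij, hjk, -, -⟩ := h
  exact Fin.val_lt_sub_two_of_lt_of_lt hij hjk

theorem Starts123.val_apply_lt {i : Fin n} (h : Starts123 σ i) : (σ i : ℕ) < n - 2 := by
  obtain ⟨j, k, -, -, hij, hjk⟩ := h
  exact Fin.val_lt_sub_two_of_lt_of_lt hij hjk

theorem pmpS123_eq_card_filter [DecidablePred (Starts123 σ)] :
    pmpS123 σ = #{i | Starts123 σ i} := by
  rw [pmpS123, Nat.card_eq_fintype_card, ← Fintype.card_subtype]
  exact Fintype.card_congr (Equiv.refl _)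

theorem pmpS123_eq_sub_two_iff :
    pmpS123 σ = n - 2 ↔ ∀ i : Fin n, (i : ℕ) < n - 2 → Starts123 σ i := by
  classical
  have hsub : ({i | Starts123 σ i} : Finset (Fin n)) ⊆
      ({i | (i : ℕ) < n - 2} : Finset (Fin n)) :=
    fun i hi => mem_filter.mpr ⟨mem_univ i, (mem_filter.mp hi).2.val_lt⟩
  have hcard : #({i : Fin n | (i : ℕ) < n - 2} : Finset (Fin n)) = n - 2 := by
    rw [Fin.card_filter_val_lt]
    omega
  rw [pmpS123_eq_card_filter]
  constructor
  · intro h i hi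
    have hi' : i ∈ ({i | Starts123 σ i} : Finset (Fin n)) :=
      (eq_of_subset_of_card_le hsub (hcard.trans h.symm).le).symm ▸ mem_filter.mpr ⟨mem_univ i, hi⟩
    exact (mem_filter.mp hi').2
  · intro h
    rw [← hcard]
    congr 1
    exact hsub.antisymm fun i hi => mem_filter.mpr ⟨mem_univ i, h i (mem_filter.mp hi).2⟩

theorem apply_eq_self_of_forall_starts123 (hn : 3 ≤ n)
    (h : ∀ i : Fin n, (i : ℕ) < n - 2 → Starts123 σ i) (i : Fin n) (hi : n - 2 ≤ (i : ℕ)) :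
    σ i = i := by
  have hlow : MapsTo σ {i | (i : ℕ) < n - 2} {i | (i : ℕ) < n - 2} :=
    fun i hi => (h i hi).val_apply_lt
  have hhigh (i : Fin n) (hi : n - 2 ≤ (i : ℕ)) : n - 2 ≤ (σ i : ℕ) := by
    simpa using σ.mapsTo_compl_of_mapsTo hlow (by simpa using hi)
  obtain ⟨j, k, hj, hk, -, hjk⟩ := h ⟨n - 3, by omega⟩ (by simp only; omega)
  have hj : n - 3 < (j : ℕ) := hj
  rw [Fin.lt_def] at hk hjk
  have hσj := hhigh j (by omega)
  have hσk := (σ k).isLt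
  obtain rfl | rfl : i = j ∨ i = k := by simp only [Fin.ext_iff]; omega
  all_goals ext; omega

theorem starts123_of_forall_apply_eq_self (h : ∀ i : Fin n, n - 2 ≤ (i : ℕ) → σ i = i)
    (i : Fin n) (hi : (i : ℕ) < n - 2) : Starts123 σ i := by
  have hσi : (σ i : ℕ) < n - 2 := by
    by_contra! hσi
    have := congrArg Fin.val (σ.injective (h _ hσi))
    omega
  refine ⟨⟨n - 2, by omega⟩, ⟨n - 1, by omega⟩, ?_, ?_, ?_, ?_⟩ <;>
    simp only [h ⟨n - 2, _⟩ le_rfl, h ⟨n - 1, _⟩ (by simp only; omega), Fin.lt_def] <;> omega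

end

theorem stmt2 (n : ℕ) (hn : 3 ≤ n) (σ : Equiv.Perm (Fin n)) :
    pmpS123 σ = n - 2 ↔
      σ ⟨n - 2, by omega⟩ = ⟨n - 2, by omega⟩ ∧ σ ⟨n - 1, by omega⟩ = ⟨n - 1, by omega⟩ := by
  rw [pmpS123_eq_sub_two_iff]
  refine ⟨fun h => ⟨?_, ?_⟩, fun ⟨h₁, h₂⟩ => starts123_of_forall_apply_eq_self fun i hi => ?_⟩
  · exact apply_eq_self_of_forall_starts123 hn h _ le_rfl
  · exact apply_eq_self_of_forall_starts123 hn h _ (by simp only; omega)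
  · obtain hi | hi : i = ⟨n - 2, by omega⟩ ∨ i = ⟨n - 1, by omega⟩ := by
      simp only [Fin.ext_iff]
      omega
    all_goals rwa [hi]
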